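/- arXiv:2603.21254 — 3 statements merged into one kernel-verified Lean document; each statement's English description precedes it below -/
import Mathlib

section
/- Let r be a positive natural number and let K, R, Q be r×r real matrices such that K is skew-symmetric (Kᵀ = -K), R is symmetric positive semi-definite, and Q is symmetric positive definite. Then every eigenvalue μ ∈ ℂ of the complexification of A = (K - R) * Q satisfies Re μ ≤ 0. -/
/-!
Take an eigenvector `v` of `A = (K - R) Q` for `μ` and put `w = Q v`. Since `Q` is Hermitian,
`w* (K - R) w = w* A v = μ · v* Q v`, where `v* Q v > 0`. The skew-Hermitian part contributes
nothing to the real part of `w* (K - R) w`, so `Re μ · v* Q v = -w* R w ≤ 0`.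
Over `ℝ` this is applied to the complexified matrices, which inherit all three hypotheses.
-/

open Matrix

open scoped ComplexOrder MatrixOrder

namespace Matrix

variable {m n 𝕜 : Type*} [RCLike 𝕜]

lemma conjTranspose_map_algebraMap (A : Matrix m n ℝ) :
    (A.map (algebraMap ℝ 𝕜))ᴴ = Aᵀ.map (algebraMap ℝ 𝕜) := by
  rw [← conjTranspose_eq_transpose_of_trivial,
    conjTranspose_map _ fun _ => (RCLike.conj_ofReal _).symm]

variable [Fintype n]

lemma exists_mulVec_eq_smul_of_mem_spectrum {K : Type*} [Field K] [DecidableEq n]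
    {A : Matrix n n K} {μ : K} (hμ : μ ∈ spectrum K A) : ∃ v ≠ 0, A *ᵥ v = μ • v := by
  rw [← spectrum_toLin', ← Module.End.hasEigenvalue_iff_mem_spectrum] at hμ
  obtain ⟨v, hv⟩ := hμ.exists_hasEigenvector
  exact ⟨v, hv.2, by simpa using hv.apply_eq_smul⟩

lemma re_star_dotProduct_mulVec_eq_zero {K : Matrix n n 𝕜} (hK : Kᴴ = -K) (x : n → 𝕜) :
    RCLike.re (star x ⬝ᵥ K *ᵥ x) = 0 := by
  have h : star (star x ⬝ᵥ K *ᵥ x) = -(star x ⬝ᵥ K *ᵥ x) := by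
    rw [← star_dotProduct, star_mulVec, ← dotProduct_mulVec, hK, neg_mulVec, dotProduct_neg]
  have h_re := congrArg RCLike.re h
  rw [RCLike.star_def, RCLike.conj_re, map_neg] at h_re
  linarith

lemma PosSemidef.map_algebraMap {R : Matrix n n ℝ} (hR : R.PosSemidef) :
    (R.map (algebraMap ℝ 𝕜)).PosSemidef := by
  classical
  obtain ⟨B, rfl⟩ := CStarAlgebra.nonneg_iff_eq_star_mul_self.mp hR.nonneg
  rw [Matrix.map_mul, star_eq_conjTranspose, conjTranspose_eq_transpose_of_trivial,
    ← conjTranspose_map_algebraMap]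
  exact posSemidef_conjTranspose_mul_self _

lemma PosDef.map_algebraMap [DecidableEq n] {Q : Matrix n n ℝ} (hQ : Q.PosDef) :
    (Q.map (algebraMap ℝ 𝕜)).PosDef :=
  hQ.posSemidef.map_algebraMap.posDef_iff_isUnit.mpr
    (hQ.isUnit.map (algebraMap ℝ 𝕜).mapMatrix)

theorem re_le_zero_of_mem_spectrum_sub_mul [DecidableEq n] {K R Q : Matrix n n 𝕜}
    (hK : Kᴴ = -K) (hR : R.PosSemidef) (hQ : Q.PosDef) {μ : 𝕜}
    (hμ : μ ∈ spectrum 𝕜 ((K - R) * Q)) : RCLike.re μ ≤ 0 := by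
  obtain ⟨v, hv0, hv⟩ := exists_mulVec_eq_smul_of_mem_spectrum hμ
  obtain ⟨q, hq, hq_eq⟩ := RCLike.pos_iff_exists_ofReal.mp (hQ.dotProduct_mulVec_pos hv0)
  set w := Q *ᵥ v
  have hkey : star w ⬝ᵥ (K - R) *ᵥ w = μ * q := by
    rw [mulVec_mulVec, hv, dotProduct_smul, star_mulVec, ← dotProduct_mulVec,
      hQ.isHermitian.eq, hq_eq, smul_eq_mul]
  have hre : RCLike.re μ * q = -RCLike.re (star w ⬝ᵥ R *ᵥ w) := by
    rw [← RCLike.re_mul_ofReal, ← hkey, sub_mulVec, dotProduct_sub, map_sub,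
      re_star_dotProduct_mulVec_eq_zero hK, zero_sub]
  exact nonpos_of_mul_nonpos_left (hre ▸ neg_nonpos.mpr (hR.re_dotProduct_nonneg w)) hq

end Matrix

theorem stmt1_general (r : ℕ) (K R Q : Matrix (Fin r) (Fin r) ℝ)
    (hK : Kᵀ = -K) (hR : R.PosSemidef) (hQ : Q.PosDef) :
    ∀ μ ∈ spectrum ℂ (((K - R) * Q).map (algebraMap ℝ ℂ)), μ.re ≤ 0 := by
  intro μ hμ
  rw [Matrix.map_mul, Matrix.map_sub _ (map_sub _)] at hμ
  have hKc : (K.map (algebraMap ℝ ℂ))ᴴ = -K.map (algebraMap ℝ ℂ) := by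
    rw [conjTranspose_map_algebraMap, hK, Matrix.map_neg _ (map_neg _)]
  exact re_le_zero_of_mem_spectrum_sub_mul hKc hR.map_algebraMap hQ.map_algebraMap hμ

/-- If `K` is skew-symmetric, `R` is symmetric positive semi-definite, and `Q` is
symmetric positive definite, then every eigenvalue of the complexification of
`A = (K - R) * Q` has nonpositive real part. -/
theorem stmt1 (r : ℕ) (hr : 0 < r) (K R Q : Matrix (Fin r) (Fin r) ℝ)
    (hK : Kᵀ = -K) (hR : R.PosSemidef) (hQ : Q.PosDef) :
    ∀ μ ∈ spectrum ℂ (((K - R) * Q).map (algebraMap ℝ ℂ)), μ.re ≤ 0 :=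
  stmt1_general r K R Q hK hR hQ
end

section
/- Let r be a positive natural number. Let K, R, Q be r×r real matrices with K skew-symmetric (Kᵀ = -K), R symmetric positive semi-definite, and Q symmetric positive definite, and set A = (K - R) * Q. Let H : Fin r → Fin r → Fin r → ℝ be a third-order tensor such that for every k ∈ Fin r there exists a skew-symmetric matrix S_k with H i j k = Σ_l (S_k) i l * Q l j for all i, j. Let z : ℝ → (Fin r → ℝ) satisfy, for every t ∈ ℝ, HasDerivAt z (A.mulVec (z t) + g (z t)) t, where (g w) i = Σ_{j,k} H i j k * w j * w k. Then the Lyapunov function t ↦ (z t) ⬝ᵥ (Q.mulVec (z t)) is antitone (nonincreasing) on ℝ. -/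
open Matrix

/-!
Along a solution, the derivative of `V(z) = zᵀ Q z` is `2 (Q z) ⬝ᵥ ż`. Writing `y = Q z`, the
linear part contributes `yᵀ (K - R) y = -yᵀ R y ≤ 0`, since `K` is skew-symmetric. The frontal
slices of `H` are `S_k Q`, so the quadratic part is `∑ₖ z_k S_k y` and contributes
`∑ₖ z_k yᵀ S_k y = 0`.
-/

variable {n : Type*} [Fintype n]

theorem Matrix.dotProduct_mulVec_self_eq_zero_of_transpose_eq_neg {M : Matrix n n ℝ}
    (hM : Mᵀ = -M) (y : n → ℝ) : y ⬝ᵥ M *ᵥ y = 0 := by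
  have h : y ⬝ᵥ M *ᵥ y = -(y ⬝ᵥ M *ᵥ y) := by
    conv_lhs => rw [dotProduct_mulVec, ← mulVec_transpose, hM, dotProduct_comm]
    rw [neg_mulVec, dotProduct_neg]
  linarith

theorem HasDerivAt.dotProduct {𝕜 : Type*} [NontriviallyNormedField 𝕜] {f g : 𝕜 → n → 𝕜}
    {f' g' : n → 𝕜} {t : 𝕜}
    (hf : HasDerivAt f f' t) (hg : HasDerivAt g g' t) :
    HasDerivAt (fun s => f s ⬝ᵥ g s) (f' ⬝ᵥ g t + f t ⬝ᵥ g') t :=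
  (HasDerivAt.fun_sum (u := Finset.univ) fun i _ =>
    (hasDerivAt_pi.1 hf i).mul (hasDerivAt_pi.1 hg i)).congr_deriv Finset.sum_add_distrib

theorem HasDerivAt.mulVec {𝕜 : Type*} [NontriviallyNormedField 𝕜] {f : 𝕜 → n → 𝕜}
    {f' : n → 𝕜} {t : 𝕜} (M : Matrix n n 𝕜) (hf : HasDerivAt f f' t) :
    HasDerivAt (fun s => M *ᵥ f s) (M *ᵥ f') t :=
  hasDerivAt_pi.2 fun i => ((hasDerivAt_const t (M i)).dotProduct hf).congr_deriv <| by
    rw [zero_dotProduct, zero_add]; rfl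

theorem HasDerivAt.dotProduct_mulVec_self {f : ℝ → n → ℝ} {f' : n → ℝ} {t : ℝ}
    {Q : Matrix n n ℝ} (hQ : Qᵀ = Q) (hf : HasDerivAt f f' t) :
    HasDerivAt (fun s => f s ⬝ᵥ Q *ᵥ f s) (2 * (Q *ᵥ f t ⬝ᵥ f')) t := by
  refine (hf.dotProduct (hf.mulVec Q)).congr_deriv ?_
  rw [dotProduct_comm f', dotProduct_mulVec (f t), ← mulVec_transpose, hQ, two_mul]

def quadContraction (H : n → n → n → ℝ) (w : n → ℝ) : n → ℝ :=
  fun i => ∑ j, ∑ k, H i j k * w j * w k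

theorem quadContraction_eq_sum_smul_mulVec {H : n → n → n → ℝ} {S : n → Matrix n n ℝ}
    {Q : Matrix n n ℝ} (hH : ∀ i j k, H i j k = (S k * Q) i j) (w : n → ℝ) :
    quadContraction H w = ∑ k, w k • S k *ᵥ Q *ᵥ w := by
  ext i
  simp only [quadContraction, hH, Finset.sum_apply, Pi.smul_apply, smul_eq_mul, mulVec_mulVec,
    mulVec, dotProduct, Finset.mul_sum]
  rw [Finset.sum_comm]
  exact Finset.sum_congr rfl fun k _ => Finset.sum_congr rfl fun j _ => by ring

theorem mulVec_dotProduct_quadContraction_eq_zero {H : n → n → n → ℝ} {S : n → Matrix n n ℝ}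
    {Q : Matrix n n ℝ} (hS : ∀ k, (S k)ᵀ = -S k) (hH : ∀ i j k, H i j k = (S k * Q) i j)
    (w : n → ℝ) : Q *ᵥ w ⬝ᵥ quadContraction H w = 0 := by
  simp only [quadContraction_eq_sum_smul_mulVec hH, dotProduct_sum, dotProduct_smul,
    dotProduct_mulVec_self_eq_zero_of_transpose_eq_neg (hS _), smul_zero, Finset.sum_const_zero]

theorem mulVec_dotProduct_sub_mul_mulVec_nonpos {K R Q : Matrix n n ℝ} (hK : Kᵀ = -K)
    (hR : R.PosSemidef) (w : n → ℝ) : Q *ᵥ w ⬝ᵥ ((K - R) * Q) *ᵥ w ≤ 0 := by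
  rw [← mulVec_mulVec, sub_mulVec, dotProduct_sub,
    dotProduct_mulVec_self_eq_zero_of_transpose_eq_neg hK]
  simpa using hR.dotProduct_mulVec_nonneg (Q *ᵥ w)

theorem stmt5_general (r : ℕ) (K R Q : Matrix (Fin r) (Fin r) ℝ)
    (hK : Kᵀ = -K) (hR : R.PosSemidef) (hQ : Q.PosDef)
    (A : Matrix (Fin r) (Fin r) ℝ) (hA : A = (K - R) * Q)
    (H : Fin r → Fin r → Fin r → ℝ)
    (hH : ∀ k : Fin r, ∃ S : Matrix (Fin r) (Fin r) ℝ, Sᵀ = -S ∧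
      ∀ i j : Fin r, H i j k = ∑ l, S i l * Q l j)
    (g : (Fin r → ℝ) → (Fin r → ℝ))
    (hg : ∀ (w : Fin r → ℝ) (i : Fin r), g w i = ∑ j, ∑ k, H i j k * w j * w k)
    (z : ℝ → Fin r → ℝ)
    (hz : ∀ t : ℝ, HasDerivAt z (A.mulVec (z t) + g (z t)) t) :
    Antitone (fun t : ℝ => (z t) ⬝ᵥ Q.mulVec (z t)) := by
  choose S hS hSQ using hH
  have hg_eq : g = quadContraction H := funext fun w => funext (hg w)
  refine antitone_of_hasDerivAt_nonpos
    (fun t => (hz t).dotProduct_mulVec_self hQ.isHermitian) fun t => ?_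
  have hlin := mulVec_dotProduct_sub_mul_mulVec_nonpos (Q := Q) hK hR (z t)
  have hquad := mulVec_dotProduct_quadContraction_eq_zero hS (fun i j k => hSQ k i j) (z t)
  rw [Pi.zero_apply, hA, hg_eq, dotProduct_add, hquad]
  linarith

/-- Lyapunov stability of the parameterized quadratic reduced-order dynamics:
along any solution of `dz/dt = A z + H : z zᵀ` with `A = (K - R) * Q` (`K` skew-symmetric,
`R` positive semi-definite, `Q` positive definite) and energy-preserving `H`, the Lyapunov
function `t ↦ z(t)ᵀ Q z(t)` is nonincreasing. -/
theorem stmt5 (r : ℕ) (hr : 0 < r) (K R Q : Matrix (Fin r) (Fin r) ℝ)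
    (hK : Kᵀ = -K) (hR : R.PosSemidef) (hQ : Q.PosDef)
    (A : Matrix (Fin r) (Fin r) ℝ) (hA : A = (K - R) * Q)
    (H : Fin r → Fin r → Fin r → ℝ)
    (hH : ∀ k : Fin r, ∃ S : Matrix (Fin r) (Fin r) ℝ, Sᵀ = -S ∧
      ∀ i j : Fin r, H i j k = ∑ l, S i l * Q l j)
    (g : (Fin r → ℝ) → (Fin r → ℝ))
    (hg : ∀ (w : Fin r → ℝ) (i : Fin r), g w i = ∑ j, ∑ k, H i j k * w j * w k)
    (z : ℝ → Fin r → ℝ)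
    (hz : ∀ t : ℝ, HasDerivAt z (A.mulVec (z t) + g (z t)) t) :
    Antitone (fun t : ℝ => (z t) ⬝ᵥ Q.mulVec (z t)) :=
  stmt5_general r K R Q hK hR hQ A hA H hH g hg z hz
end

section
/- Let r be a positive natural number, let Q̃ and K₀ be fixed r×r real matrices with Q̃ symmetric, and let F : Matrix (Fin r) (Fin r) ℝ → ℝ be a function. Let R₀ be an r×r real matrix, set A₀ = (K₀ - K₀ᵀ - R₀ * R₀ᵀ) * Q̃, and suppose F has Fréchet derivative at A₀ given by δ ↦ ⟪G, δ⟫ for some r×r real matrix G, where ⟪M, N⟫ = trace(Mᵀ * N) is the Frobenius inner product. Then the composite map R ↦ F((K₀ - K₀ᵀ - R * Rᵀ) * Q̃) has Fréchet derivative at R₀ given by δ ↦ ⟪-(G * Q̃ + Q̃ * Gᵀ) * R₀, δ⟫; that is, its Frobenius gradient is ∇_R = -(G * Q̃ + Q̃ * Gᵀ) * R₀. -/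
open Matrix

attribute [local instance] Matrix.normedAddCommGroup Matrix.normedSpace

/-!
The map `R ↦ (K₀ - K₀ᵀ - R Rᵀ) Q̃` has differential `δ ↦ -(R₀ δᵀ + δ R₀ᵀ) Q̃` at `R₀` (product
rule for matrix multiplication and linearity of the transpose). Composing with `δ ↦ tr (Gᵀ δ)`
and cycling the two resulting traces, then using `Q̃ᵀ = Q̃`, identifies the gradient.
-/

theorem Matrix.trace_transpose_mul_mul_transpose_add_mul {R : Type*} [CommSemiring R]
    {m n p : Type*} [Fintype m] [Fintype n] [Fintype p] (G Q : Matrix m p R) (A δ : Matrix m n R) :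
    (Gᵀ * ((A * δᵀ + δ * Aᵀ) * Q)).trace = (((G * Qᵀ + Q * Gᵀ) * A)ᵀ * δ).trace := by
  have h₁ : (Gᵀ * (A * δᵀ * Q)).trace = ((Q * Gᵀ * A)ᵀ * δ).trace := by
    rw [← trace_transpose]
    simp only [transpose_mul, transpose_transpose, Matrix.mul_assoc]
    rw [trace_mul_cycle', Matrix.mul_assoc]
  have h₂ : (Gᵀ * (δ * Aᵀ * Q)).trace = ((G * Qᵀ * A)ᵀ * δ).trace := by
    simp only [transpose_mul, transpose_transpose, Matrix.mul_assoc]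
    rw [trace_mul_cycle', Matrix.mul_assoc]
  rw [Matrix.add_mul, Matrix.mul_add, trace_add, h₁, h₂, Matrix.add_mul, transpose_add,
    Matrix.add_mul, trace_add, add_comm]

namespace Matrix

variable {𝕜 : Type*} [NontriviallyNormedField 𝕜] [CompleteSpace 𝕜]
  {m n p : Type*} [Fintype m] [Fintype n] [Fintype p]

noncomputable def mulCLM : Matrix m n 𝕜 →L[𝕜] Matrix n p 𝕜 →L[𝕜] Matrix m p 𝕜 :=
  LinearMap.toContinuousLinearMap <| LinearMap.toContinuousLinearMap.toLinearMap ∘ₗ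
    LinearMap.mk₂ 𝕜 (· * ·) Matrix.add_mul (fun c A B => Matrix.smul_mul c A B) Matrix.mul_add
      (fun c A B => Matrix.mul_smul A c B)

/-- Declared with its own type so that, unlike `mulCLM.flip B`, its topologies are the ones of
`mulCLM` and the two can be added. -/
noncomputable def mulRightCLM (B : Matrix n p 𝕜) : Matrix m n 𝕜 →L[𝕜] Matrix m p 𝕜 :=
  mulCLM.flip B

noncomputable def transposeCLM : Matrix m n 𝕜 →L[𝕜] Matrix n m 𝕜 :=
  LinearMap.toContinuousLinearMap (transposeLinearEquiv m n 𝕜 𝕜).toLinearMap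

variable {E : Type*} [NormedAddCommGroup E] [NormedSpace 𝕜 E] {x : E}

theorem _root_.HasFDerivAt.matrix_mul {f : E → Matrix m n 𝕜} {g : E → Matrix n p 𝕜}
    {f' : E →L[𝕜] Matrix m n 𝕜} {g' : E →L[𝕜] Matrix n p 𝕜}
    (hf : HasFDerivAt f f' x) (hg : HasFDerivAt g g' x) :
    HasFDerivAt (fun y => f y * g y) (mulCLM (f x) ∘L g' + mulRightCLM (g x) ∘L f') x :=
  mulCLM.hasFDerivAt_of_bilinear hf hg

theorem _root_.HasFDerivAt.matrix_mul_const {f : E → Matrix m n 𝕜} {f' : E →L[𝕜] Matrix m n 𝕜}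
    (hf : HasFDerivAt f f' x) (B : Matrix n p 𝕜) :
    HasFDerivAt (fun y => f y * B) (mulRightCLM B ∘L f') x :=
  (mulRightCLM B).hasFDerivAt.comp x hf

theorem _root_.HasFDerivAt.matrix_transpose {f : E → Matrix m n 𝕜} {f' : E →L[𝕜] Matrix m n 𝕜}
    (hf : HasFDerivAt f f' x) :
    HasFDerivAt (fun y => (f y)ᵀ) (transposeCLM ∘L f') x :=
  (transposeCLM (m := m) (n := n) (𝕜 := 𝕜)).hasFDerivAt.comp x hf

theorem hasFDerivAt_mul_transpose_self (A : Matrix m n 𝕜) :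
    HasFDerivAt (fun X : Matrix m n 𝕜 => X * Xᵀ) (mulCLM A ∘L transposeCLM + mulRightCLM Aᵀ) A :=
  (hasFDerivAt_id A).matrix_mul (hasFDerivAt_id A).matrix_transpose

end Matrix

theorem stmt15_general (r : ℕ)
    (Qt K₀ : Matrix (Fin r) (Fin r) ℝ) (hQt : Qtᵀ = Qt)
    (F : Matrix (Fin r) (Fin r) ℝ → ℝ)
    (R₀ G : Matrix (Fin r) (Fin r) ℝ)
    (L : Matrix (Fin r) (Fin r) ℝ →L[ℝ] ℝ)
    (hL : ∀ δ : Matrix (Fin r) (Fin r) ℝ, L δ = (Gᵀ * δ).trace)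
    (hF : HasFDerivAt F L ((K₀ - K₀ᵀ - R₀ * R₀ᵀ) * Qt)) :
    ∃ L' : Matrix (Fin r) (Fin r) ℝ →L[ℝ] ℝ,
      (∀ δ : Matrix (Fin r) (Fin r) ℝ,
        L' δ = ((-((G * Qt + Qt * Gᵀ) * R₀))ᵀ * δ).trace) ∧
      HasFDerivAt (fun R : Matrix (Fin r) (Fin r) ℝ =>
        F ((K₀ - K₀ᵀ - R * Rᵀ) * Qt)) L' R₀ := by
  have hA := ((hasFDerivAt_mul_transpose_self R₀).const_sub (K₀ - K₀ᵀ)).matrix_mul_const Qt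
  refine ⟨_, fun δ => ?_, hF.comp R₀ hA⟩
  -- `simp` cannot unfold this composite: its factors carry the product and the normed topology
  -- on matrices, which agree only up to unfolding.
  change L (-(R₀ * δᵀ + δ * R₀ᵀ) * Qt) = _
  rw [hL, Matrix.neg_mul, Matrix.mul_neg, trace_neg, trace_transpose_mul_mul_transpose_add_mul, hQt,
    transpose_neg, Matrix.neg_mul, trace_neg]

/-- Chain rule for the parameterization `A(R) = (K₀ - K₀ᵀ - R Rᵀ) Q̃`: if `F` has Frobenius
gradient `G` at `A₀ = A(R₀)`, then `R ↦ F(A(R))` has Frobenius gradient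
`-(G * Q̃ + Q̃ * Gᵀ) * R₀` at `R₀`. -/
theorem stmt15 (r : ℕ) (hr : 0 < r)
    (Qt K₀ : Matrix (Fin r) (Fin r) ℝ) (hQt : Qtᵀ = Qt)
    (F : Matrix (Fin r) (Fin r) ℝ → ℝ)
    (R₀ G : Matrix (Fin r) (Fin r) ℝ)
    (L : Matrix (Fin r) (Fin r) ℝ →L[ℝ] ℝ)
    (hL : ∀ δ : Matrix (Fin r) (Fin r) ℝ, L δ = (Gᵀ * δ).trace)
    (hF : HasFDerivAt F L ((K₀ - K₀ᵀ - R₀ * R₀ᵀ) * Qt)) :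
    ∃ L' : Matrix (Fin r) (Fin r) ℝ →L[ℝ] ℝ,
      (∀ δ : Matrix (Fin r) (Fin r) ℝ,
        L' δ = ((-((G * Qt + Qt * Gᵀ) * R₀))ᵀ * δ).trace) ∧
      HasFDerivAt (fun R : Matrix (Fin r) (Fin r) ℝ =>
        F ((K₀ - K₀ᵀ - R * Rᵀ) * Qt)) L' R₀ :=
  stmt15_general r Qt K₀ hQt F R₀ G L hL hF
end
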